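/- Let L be a digit string admitting an infinite sequence of CVs. Then for every n ≥ 3, if the height of CV_n(L) is more than 5, then the height of CV_{n+1}(L) is at most the height of CV_n(L). -/

import Mathlib

/-- A digit string is a nonempty finite list of natural numbers, each at most 9,
read most-significant-first. -/
def DigitString (L : List ℕ) : Prop := L ≠ [] ∧ ∀ d ∈ L, d ≤ 9

/-- The curriculum vitae of `L`: the digit string of length `m + 1`, where `m` is the
largest entry of `L`, whose `i`-th entry (0-indexed) counts the occurrences of `i` in `L`. -/
def CV (L : List ℕ) : List ℕ :=
  (List.range (L.foldr max 0 + 1)).map (fun i => L.count i)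

/-- The sequence of CVs of `L`: `CVseq L 0 = L` and `CVseq L (n+1) = CV (CVseq L n)`. -/
def CVseq (L : List ℕ) : ℕ → List ℕ
  | 0 => L
  | n + 1 => CV (CVseq L n)

/-- `L` admits an infinite sequence of CVs: for every `n`, each value occurs at most
9 times in `CVseq L n` (so the next CV is defined). -/
def AdmitsCVs (L : List ℕ) : Prop := ∀ n, ∀ d, (CVseq L n).count d ≤ 9

/-- The complete life story of `L`: the digit string of length 10 whose `i`-th entry
(0-indexed, `0 ≤ i ≤ 9`) counts the occurrences of `i` in `L`. -/
def CLS (L : List ℕ) : List ℕ := (List.range 10).map (fun i => L.count i)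

/-- The sequence of life stories of `L`. -/
def CLSseq (L : List ℕ) : ℕ → List ℕ
  | 0 => L
  | n + 1 => CLS (CLSseq L n)

/-- `L` admits an infinite sequence of life stories: for every `n`, each value occurs
at most 9 times in `CLSseq L n`. -/
def AdmitsCLSs (L : List ℕ) : Prop := ∀ n, ∀ d, (CLSseq L n).count d ≤ 9

/-- The height of a digit string: the maximum of (its largest entry plus 1) and its length. -/
def height (L : List ℕ) : ℕ := max (L.foldr max 0 + 1) L.length

/-! If the height increased from `CV_n` to `CV_{n+1}`, the largest entry of `CV_{n+1}`, a count
of a value in `CV_n`, would be at least the length of `CV_n`; so `CV_n` is constant, of length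
`h = height CV_n`. Then every value `0, …, h - 1` occurs in `CV_{n-1}`, and `h ≥ 6` makes its
sum at least `0 + 1 + ⋯ + 5 = 15`. But the sum of a CV is the length of its argument, so the sum
of `CV_{n-1}` is the length of `CV_{n-2}`, one more than the largest entry of `CV_{n-3}`, hence
at most 10. -/

open Finset

lemma foldr_max_mem {l : List ℕ} (h : l ≠ []) : l.foldr max 0 ∈ l :=
  List.maximum_mem (List.foldr_max_of_ne_nil h).symm

lemma CV_ne_nil (l : List ℕ) : CV l ≠ [] := by
  simp [CV, List.range_succ]

lemma length_CV (l : List ℕ) : (CV l).length = l.foldr max 0 + 1 := by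
  simp [CV]

lemma mem_CV {l : List ℕ} {x : ℕ} : x ∈ CV l ↔ ∃ i ≤ l.foldr max 0, l.count i = x := by
  simp [CV]

lemma sum_CV (l : List ℕ) : (CV l).sum = l.length := by
  rw [CV, ← List.sum_toFinset _ List.nodup_range, List.toFinset_range,
    ← List.sum_toFinset_count_eq_length]
  refine (sum_subset (fun x hx => ?_) fun x _ hx => List.count_eq_zero.mpr ?_).symm
  · exact mem_range.mpr (Nat.lt_succ_of_le (List.le_max_of_le (List.mem_toFinset.mp hx) le_rfl))
  · simpa using hx

lemma exists_eq_replicate_height_of_height_lt_height_CV {M : List ℕ}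
    (h : height M < height (CV M)) : ∃ v, M = List.replicate (height M) v := by
  obtain ⟨v, -, hv⟩ := mem_CV.mp (foldr_max_mem (CV_ne_nil M))
  have hcount : M.count v = M.length ∧ M.length = height M := by
    have := M.count_le_length (a := v)
    unfold height at h ⊢
    rw [length_CV] at h
    omega
  exact ⟨v, List.eq_replicate_iff.mpr
    ⟨hcount.2, fun b hb => (List.count_eq_length.mp hcount.1 b hb).symm⟩⟩

lemma forall_lt_mem_of_CV_eq_replicate {K : List ℕ} {k v : ℕ} (hK : K ≠ [])
    (h : CV K = List.replicate k v) : ∀ i < k, i ∈ K := by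
  have hk : k = K.foldr max 0 + 1 := by rw [← length_CV, h, List.length_replicate]
  have hcount : ∀ i < k, K.count i = v := fun i hi =>
    List.eq_of_mem_replicate (h ▸ mem_CV.mpr ⟨i, by omega, rfl⟩)
  have hv : 0 < v := hcount (K.foldr max 0) (by omega) ▸ List.count_pos_iff.mpr (foldr_max_mem hK)
  exact fun i hi => List.count_pos_iff.mp (hcount i hi ▸ hv)

lemma sum_range_le_sum_of_forall_lt_mem {K : List ℕ} {n : ℕ} (h : ∀ i < n, i ∈ K) :
    ∑ i ∈ range n, i ≤ K.sum :=
  calc ∑ i ∈ range n, i ≤ ∑ i ∈ K.toFinset, i :=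
        sum_le_sum_of_subset fun i hi => List.mem_toFinset.mpr (h i (mem_range.mp hi))
    _ ≤ ∑ i ∈ K.toFinset, K.count i • i := sum_le_sum fun i hi =>
        Nat.le_mul_of_pos_left i (List.count_pos_iff.mpr (List.mem_toFinset.mp hi))
    _ = K.sum := (sum_list_count K).symm

lemma le_nine_of_mem_CVseq {L : List ℕ} (hL : ∀ d ∈ L, d ≤ 9) (h : AdmitsCVs L) :
    ∀ n, ∀ x ∈ CVseq L n, x ≤ 9
  | 0 => hL
  | n + 1 => fun x hx => by
    obtain ⟨i, -, rfl⟩ := mem_CV.mp hx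
    exact h n i

lemma sum_CVseq_add_two_le_ten {L : List ℕ} (hL : ∀ d ∈ L, d ≤ 9) (h : AdmitsCVs L)
    (n : ℕ) : (CVseq L (n + 2)).sum ≤ 10 := by
  change (CV (CV (CVseq L n))).sum ≤ 10
  rw [sum_CV, length_CV]
  have : (CVseq L n).foldr max 0 ≤ 9 := List.max_le_of_forall_le _ _ (le_nine_of_mem_CVseq hL h n)
  omega

theorem cvseq_height_not_increasing (L : List ℕ) (hL : DigitString L)
    (h : AdmitsCVs L) :
    ∀ n, 3 ≤ n → 5 < height (CVseq L n) →
      height (CVseq L (n + 1)) ≤ height (CVseq L n) := by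
  intro n hn hbig
  obtain ⟨m, rfl⟩ : ∃ m, n = m + 3 := ⟨n - 3, by omega⟩
  by_contra! hlt
  obtain ⟨v, hv⟩ := exists_eq_replicate_height_of_height_lt_height_CV hlt
  have hmem := forall_lt_mem_of_CV_eq_replicate (CV_ne_nil _) hv
  have h15 : 15 ≤ (CVseq L (m + 2)).sum :=
    sum_range_le_sum_of_forall_lt_mem (n := 6) fun i hi => hmem i (by omega)
  have h10 := sum_CVseq_add_two_le_ten hL.2 h m
  omega
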